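/- arXiv:0907.2831 — 3 statements merged into one kernel-verified Lean document; each statement's English description precedes it below -/
import Mathlib

section
/- lim_{n→∞} R_{3,2}(n)/n = 2/3. -/
/-- `S` contains a `k`-term arithmetic progression with common difference `d`,
starting at some `i ≥ 1`. -/
def HasAPd (S : Finset ℕ) (k d : ℕ) : Prop :=
  ∃ i : ℕ, 1 ≤ i ∧ ∀ j < k, i + j * d ∈ S

/-- `S ⊆ {1,…,n}` and `S` contains no `k`-term AP with common difference `d`,
`1 ≤ d ≤ D`. -/
def AvoidsAP (k D n : ℕ) (S : Finset ℕ) : Prop :=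
  S ⊆ Finset.Icc 1 n ∧ ∀ d : ℕ, 1 ≤ d → d ≤ D → ¬ HasAPd S k d

/-- `R k D n` : maximum cardinality of such an `S`. -/
noncomputable def R (k D n : ℕ) : ℕ :=
  sSup {m : ℕ | ∃ S : Finset ℕ, AvoidsAP k D n S ∧ S.card = m}

open Filter Topology Finset

section Bounds

variable {k D n : ℕ} {S : Finset ℕ}

lemma AvoidsAP.card_le (h : AvoidsAP k D n S) : #S ≤ n := by
  simpa using card_le_card h.1

lemma AvoidsAP.card_le_R (h : AvoidsAP k D n S) : #S ≤ R k D n :=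
  le_csSup ⟨n, by rintro _ ⟨T, hT, rfl⟩; exact hT.card_le⟩ ⟨S, h, rfl⟩

lemma R_le {m : ℕ} (h : ∀ S, AvoidsAP k D n S → #S ≤ m) : R k D n ≤ m :=
  csSup_le' (by rintro _ ⟨S, hS, rfl⟩; exact h S hS)

end Bounds

/-- Every 3-term progression with difference 1 or 2 meets each residue class mod 3. -/
lemma avoidsAP_filter_not_three_dvd (n : ℕ) :
    AvoidsAP 3 2 n ({x ∈ Icc 1 n | ¬ 3 ∣ x}) := by
  refine ⟨filter_subset _ _, ?_⟩
  rintro d hd1 hd2 ⟨i, -, h⟩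
  have h0 := (mem_filter.mp (h 0 (by norm_num))).2
  have h1 := (mem_filter.mp (h 1 (by norm_num))).2
  have h2 := (mem_filter.mp (h 2 (by norm_num))).2
  interval_cases d <;> omega

lemma card_filter_not_dvd_Icc (n m : ℕ) : #{x ∈ Icc 1 n | ¬ m ∣ x} = n - n / m := by
  have hdvd : #{x ∈ Icc 1 n | m ∣ x} = n / m := Nat.Ioc_filter_dvd_card_eq_div n m
  have hsplit := card_filter_add_card_filter_not (s := Icc 1 n) (p := (m ∣ ·))
  simp only [Nat.card_Icc, add_tsub_cancel_right] at hsplit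
  omega

lemma sub_div_three_le_R (n : ℕ) : n - n / 3 ≤ R 3 2 n :=
  card_filter_not_dvd_Icc n 3 ▸ (avoidsAP_filter_not_three_dvd n).card_le_R

lemma card_inter_Icc_le_two {a : ℕ} (ha : 1 ≤ a) (hS : ¬ HasAPd S 3 1) :
    #(S ∩ Icc a (a + 2)) ≤ 2 := by
  by_contra! hgt
  have hfull : S ∩ Icc a (a + 2) = Icc a (a + 2) :=
    eq_of_subset_of_card_le inter_subset_right (by rw [Nat.card_Icc]; omega)
  refine hS ⟨a, ha, fun j hj => mem_of_mem_inter_left (s₂ := Icc a (a + 2)) ?_⟩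
  rw [hfull, mem_Icc]
  omega

/-- Split `{1, …, n}` into the blocks `{3t+1, 3t+2, 3t+3}`; each block holds at most two
elements of `S`. -/
lemma R_three_two_le (n : ℕ) : R 3 2 n ≤ 2 * ((n + 2) / 3) := by
  refine R_le fun S hS => ?_
  have hblock : ∀ t ∈ range ((n + 2) / 3), #{x ∈ S | (x - 1) / 3 = t} ≤ 2 := by
    intro t _
    refine le_trans (card_le_card fun x hx => ?_)
      (card_inter_Icc_le_two (a := 3 * t + 1) (by omega) (hS.2 1 le_rfl (by norm_num)))
    obtain ⟨hxS, hxt⟩ := mem_filter.mp hx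
    have := mem_Icc.mp (hS.1 hxS)
    exact mem_inter.mpr ⟨hxS, mem_Icc.mpr (by omega)⟩
  simpa using card_le_mul_card_image_of_maps_to
    (fun x hx => by have := mem_Icc.mp (hS.1 hx); exact mem_range.mpr (by omega)) 2 hblock

lemma tendsto_div_natCast_of_le_of_le {f : ℕ → ℝ} {a C : ℝ} (hlo : ∀ n, a * n ≤ f n)
    (hhi : ∀ n, f n ≤ a * n + C) : Tendsto (fun n : ℕ => f n / n) atTop (𝓝 a) := by
  have hlim : Tendsto (fun n : ℕ => a + C * (1 / n)) atTop (𝓝 a) := by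
    simpa using tendsto_const_nhds.add (tendsto_one_div_atTop_nhds_zero_nat.const_mul C)
  refine tendsto_of_tendsto_of_tendsto_of_le_of_le' tendsto_const_nhds hlim ?_ ?_ <;>
    filter_upwards [eventually_gt_atTop 0] with n hn
  · rw [le_div_iff₀ (by exact_mod_cast hn)]
    exact hlo n
  · rw [div_le_iff₀ (by exact_mod_cast hn), add_mul, one_div,
      mul_assoc, inv_mul_cancel₀ (by positivity), mul_one]
    exact hhi n

theorem R_three_two_limit :
    Filter.Tendsto (fun n : ℕ => (R 3 2 n : ℝ) / n) Filter.atTop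
      (nhds (2 / 3 : ℝ)) := by
  refine tendsto_div_natCast_of_le_of_le (C := 4 / 3) (fun n => ?_) (fun n => ?_)
  · have hdiv : ((n / 3 : ℕ) : ℝ) ≤ n / 3 := Nat.cast_div_le
    have hR : ((n - n / 3 : ℕ) : ℝ) ≤ R 3 2 n := by exact_mod_cast sub_div_three_le_R n
    rw [Nat.cast_sub (Nat.div_le_self n 3)] at hR
    linarith
  · have hdiv : (((n + 2) / 3 : ℕ) : ℝ) ≤ ((n + 2 : ℕ) : ℝ) / 3 := Nat.cast_div_le
    have hR : (R 3 2 n : ℝ) ≤ 2 * (((n + 2) / 3 : ℕ) : ℝ) := by exact_mod_cast R_three_two_le n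
    push_cast at hdiv
    linarith
end

section
/- For k ≥ 3, D ≥ 1, there exist positive integers P, Q and integers a_1, ..., a_Q such that for all sufficiently large n and all i ∈ {1,...,Q}, R_{k,D}(Qn + i) = Pn + a_i; i.e., R_{k,D} is eventually quasi-linear. -/
open Finset Filter

namespace APFree

def apSpan (k D : ℕ) : ℕ := (k - 1) * D

def period (k D : ℕ) : ℕ := (2 ^ apSpan k D).factorial

lemma period_pos (k D : ℕ) : 0 < period k D := Nat.factorial_pos _

lemma dvd_period {k D ℓ : ℕ} (hℓ : 0 < ℓ) (hℓM : ℓ ≤ 2 ^ apSpan k D) :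
    ℓ ∣ period k D :=
  Nat.dvd_factorial hℓ hℓM

def splice (p q : ℕ) (X Z : Finset ℕ) : Finset ℕ :=
  {x ∈ X | x ≤ p} ∪ {z ∈ Z | q < z}.image (· + p - q)

section splice

variable {p q x : ℕ} {X Z : Finset ℕ}

lemma mem_splice_of_le (hx : x ≤ p) : x ∈ splice p q X Z ↔ x ∈ X := by
  simp only [splice, mem_union, mem_filter, mem_image]
  constructor
  · rintro (⟨h, -⟩ | ⟨z, ⟨-, hz⟩, rfl⟩)
    · exact h
    · omega
  · exact fun h => Or.inl ⟨h, hx⟩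

lemma mem_splice_of_lt (hx : p < x) : x ∈ splice p q X Z ↔ x + q - p ∈ Z := by
  simp only [splice, mem_union, mem_filter, mem_image]
  constructor
  · rintro (⟨-, h⟩ | ⟨z, ⟨hz, hqz⟩, rfl⟩)
    · omega
    · rwa [show z + p - q + q - p = z by omega]
  · exact fun h => Or.inr ⟨x + q - p, ⟨h, by omega⟩, by omega⟩

lemma card_splice : #(splice p q X Z) = #{x ∈ X | x ≤ p} + #{z ∈ Z | q < z} := by
  rw [splice, card_union_of_disjoint, card_image_of_injOn]
  · intro a ha b hb hab
    simp only [coe_filter, Set.mem_ofPred_eq] at ha hb hab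
    omega
  · simp only [disjoint_left, mem_filter, mem_image]
    rintro _ ⟨-, ha⟩ ⟨z, ⟨-, hz⟩, rfl⟩
    omega

end splice

/-- The block `(s, s + ℓ]` of `S` can be cut out or repeated: see `AvoidsAP.exists_strip` and
`AvoidsAP.exists_pump`. -/
structure IsCycle (k D : ℕ) (S : Finset ℕ) (s ℓ : ℕ) : Prop where
  apSpan_le : apSpan k D ≤ s
  pos : 0 < ℓ
  window : ∀ j < apSpan k D, s - j ∈ S ↔ s + ℓ - j ∈ S

def gain (S : Finset ℕ) (s ℓ : ℕ) : ℕ := #{x ∈ S | s < x ∧ x ≤ s + ℓ}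

section cycle

variable {k D s ℓ : ℕ} {S T : Finset ℕ}

lemma gain_le (S : Finset ℕ) (s ℓ : ℕ) : gain S s ℓ ≤ ℓ := by
  calc gain S s ℓ ≤ #(Ioc s (s + ℓ)) := card_le_card fun x hx => by
        simp only [mem_filter] at hx
        simpa using hx.2
    _ = ℓ := by simp

lemma gain_zero (S : Finset ℕ) (s : ℕ) : gain S s 0 = 0 := by
  simp only [gain, card_eq_zero, filter_eq_empty_iff]
  omega

lemma gain_eq_of_shift (t : ℕ)
    (h : ∀ x, s < x → x ≤ s + ℓ → (x + t ∈ T ↔ x ∈ S)) :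
    gain T (s + t) ℓ = gain S s ℓ := by
  refine card_nbij' (· - t) (· + t) (fun x hx => ?_) (fun x hx => ?_) (fun x hx => ?_)
    (fun x _ => by simp)
  · simp only [coe_filter, Set.mem_ofPred_eq] at hx ⊢
    refine ⟨(h _ (by omega) (by omega)).1 ?_, by omega, by omega⟩
    rw [Nat.sub_add_cancel (by omega)]
    exact hx.1
  · simp only [coe_filter, Set.mem_ofPred_eq] at hx ⊢
    exact ⟨(h _ hx.2.1 hx.2.2).2 hx.1, by omega, by omega⟩
  · simp only [coe_filter, Set.mem_ofPred_eq] at hx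
    dsimp only
    omega

lemma gain_congr (h : ∀ x ≤ s + ℓ, x ∈ T ↔ x ∈ S) : gain T s ℓ = gain S s ℓ :=
  gain_eq_of_shift 0 fun x _ hx => h x hx

lemma IsCycle.congr (hc : IsCycle k D T s ℓ) (h : ∀ x ≤ s + ℓ, x ∈ T ↔ x ∈ S) :
    IsCycle k D S s ℓ :=
  ⟨hc.apSpan_le, hc.pos, fun j hj => by
    rw [← h _ (by omega), ← h _ (by omega)]
    exact hc.window j hj⟩

lemma card_filter_le_add_gain_add (S : Finset ℕ) (s ℓ : ℕ) :
    #{x ∈ S | x ≤ s} + gain S s ℓ + #{x ∈ S | s + ℓ < x} = #S := by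
  rw [gain, ← card_union_of_disjoint (disjoint_filter.2 fun x _ h => by omega), ← filter_or,
    ← card_union_of_disjoint (disjoint_filter.2 fun x _ h => by omega), ← filter_or,
    filter_true_of_mem fun x _ => by omega]

end cycle

theorem exists_isCycle_mem_Icc {k D a : ℕ} (S : Finset ℕ) (ha : apSpan k D ≤ a) :
    ∃ s ℓ, IsCycle k D S s ℓ ∧ a ≤ s ∧ s + ℓ ≤ a + 2 ^ apSpan k D := by
  classical
  let pattern : ℕ → Finset ℕ := fun p => {j ∈ range (apSpan k D) | p - j ∈ S}
  have key : ∀ x ∈ Icc a (a + 2 ^ apSpan k D), ∀ y ∈ Icc a (a + 2 ^ apSpan k D), x < y →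
      pattern x = pattern y →
        ∃ s ℓ, IsCycle k D S s ℓ ∧ a ≤ s ∧ s + ℓ ≤ a + 2 ^ apSpan k D := by
    intro x hx y hy hxy hpat
    simp only [mem_Icc] at hx hy
    refine ⟨x, y - x, ⟨by omega, by omega, fun j hj => ?_⟩, hx.1, by omega⟩
    rw [Nat.add_sub_cancel' hxy.le]
    simpa [pattern, hj] using congr(j ∈ $hpat)
  have hcard : #(range (apSpan k D)).powerset < #(Icc a (a + 2 ^ apSpan k D)) := by
    simp only [card_powerset, card_range, Nat.card_Icc]
    omega
  obtain ⟨x, hx, y, hy, hxy, hpat⟩ := exists_ne_map_eq_of_card_lt_of_maps_to hcard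
    (f := pattern) fun p _ => mem_powerset.2 (filter_subset _ _)
  rcases hxy.lt_or_gt with h | h
  · exact key x hx y hy h hpat
  · exact key y hy x hx h hpat.symm

def IsCycleType (k D ℓ g : ℕ) : Prop :=
  ℓ ≤ 2 ^ apSpan k D ∧
    ∃ n S s, AvoidsAP k D n S ∧ IsCycle k D S s ℓ ∧ s + ℓ ≤ n ∧ gain S s ℓ = g

/-- Repeating a cycle of type `(ℓ, g)` `period k D / ℓ` times lengthens a set by `period k D`
and adds `g * (period k D / ℓ)` elements. -/
def cycleRates (k D : ℕ) : Set ℕ :=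
  {r | ∃ ℓ g, IsCycleType k D ℓ g ∧ g * (period k D / ℓ) = r}

noncomputable def maxRate (k D : ℕ) : ℕ := sSup (cycleRates k D)

section rate

variable {k D n s ℓ g : ℕ} {S : Finset ℕ}

lemma IsCycle.isCycleType (hc : IsCycle k D S s ℓ) (hS : AvoidsAP k D n S) (hn : s + ℓ ≤ n)
    (hℓ : ℓ ≤ 2 ^ apSpan k D) : IsCycleType k D ℓ (gain S s ℓ) :=
  ⟨hℓ, n, S, s, hS, hc, hn, rfl⟩

lemma isCycleType_apSpan_add_one (hk : 2 ≤ k) : IsCycleType k D (apSpan k D + 1) 1 := by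
  have hD : D ≤ apSpan k D := Nat.le_mul_of_pos_left D (by omega)
  set W := apSpan k D
  refine ⟨Nat.lt_two_pow_self, 2 * (W + 1), {W + 1, 2 * (W + 1)}, W + 1,
    ⟨fun x hx => ?_, fun d hd hdD ⟨i, _, hAP⟩ => ?_⟩,
    ⟨by omega, by omega, fun j hj => ?_⟩, by omega, ?_⟩
  · simp only [mem_insert, mem_singleton, mem_Icc] at hx ⊢
    omega
  · have h₀ := hAP 0 (by omega)
    have h₁ := hAP 1 (by omega)
    simp only [mem_insert, mem_singleton] at h₀ h₁
    omega
  · simp only [mem_insert, mem_singleton]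
    omega
  · rw [gain, card_eq_one]
    exact ⟨2 * (W + 1), by ext x; simp only [mem_filter, mem_insert, mem_singleton]; omega⟩

lemma IsCycleType.pos (h : IsCycleType k D ℓ g) : 0 < ℓ := by
  obtain ⟨-, _, _, _, -, hc, -, -⟩ := h
  exact hc.pos

lemma IsCycleType.le (h : IsCycleType k D ℓ g) : g ≤ ℓ := by
  obtain ⟨-, -, S, s, -, -, -, rfl⟩ := h
  exact gain_le S s ℓ

lemma IsCycleType.period_mul_eq (h : IsCycleType k D ℓ g) :
    period k D * g = ℓ * (g * (period k D / ℓ)) := by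
  rw [mul_left_comm, Nat.mul_div_cancel' (dvd_period h.pos h.1), mul_comm]

lemma bddAbove_cycleRates (k D : ℕ) : BddAbove (cycleRates k D) := by
  refine ⟨period k D, ?_⟩
  rintro _ ⟨ℓ, g, h, rfl⟩
  calc g * (period k D / ℓ) ≤ ℓ * (period k D / ℓ) := Nat.mul_le_mul_right _ h.le
    _ ≤ period k D := Nat.mul_div_le _ _

lemma IsCycleType.rate_le_maxRate (h : IsCycleType k D ℓ g) :
    g * (period k D / ℓ) ≤ maxRate k D :=
  le_csSup (bddAbove_cycleRates k D) ⟨ℓ, g, h, rfl⟩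

lemma IsCycleType.period_mul_le (h : IsCycleType k D ℓ g) :
    period k D * g ≤ maxRate k D * ℓ := by
  rw [h.period_mul_eq, mul_comm (maxRate k D)]
  exact Nat.mul_le_mul_left _ h.rate_le_maxRate

lemma IsCycleType.period_mul_lt (h : IsCycleType k D ℓ g)
    (hlt : g * (period k D / ℓ) < maxRate k D) : period k D * g < maxRate k D * ℓ := by
  rw [h.period_mul_eq, mul_comm (maxRate k D)]
  exact Nat.mul_lt_mul_of_pos_left hlt h.pos

lemma exists_isCycleType_rate_eq_maxRate (hk : 2 ≤ k) :
    ∃ ℓ g, IsCycleType k D ℓ g ∧ g * (period k D / ℓ) = maxRate k D :=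
  Nat.sSup_mem (s := cycleRates k D) ⟨_, _, _, isCycleType_apSpan_add_one hk, rfl⟩
    (bddAbove_cycleRates k D)

lemma maxRate_pos (hk : 2 ≤ k) : 0 < maxRate k D := by
  have h := isCycleType_apSpan_add_one (D := D) hk
  refine lt_of_lt_of_le ?_ h.rate_le_maxRate
  rw [one_mul]
  exact Nat.div_pos (Nat.le_of_dvd (period_pos k D) (dvd_period h.pos h.1)) h.pos

end rate

end APFree

open APFree

namespace AvoidsAP

variable {k D n s ℓ : ℕ} {S : Finset ℕ}

lemma empty (hk : 0 < k) (D n : ℕ) : AvoidsAP k D n ∅ :=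
  ⟨empty_subset _, fun _ _ _ ⟨_, _, h⟩ => by simpa using h 0 hk⟩

lemma mono {m : ℕ} (hS : AvoidsAP k D m S) (hmn : m ≤ n) : AvoidsAP k D n S :=
  ⟨hS.1.trans (Icc_subset_Icc le_rfl hmn), hS.2⟩

lemma card_le_s10 (hS : AvoidsAP k D n S) : #S ≤ n := by
  simpa using card_le_card hS.1

/-- A progression of difference at most `D` spans at most `apSpan k D`, so it lies either in the
part taken from `X` or, read through the matching windows, in the part taken from `Z`. -/
theorem splice {a b p q : ℕ} {X Z : Finset ℕ} (hX : AvoidsAP k D a X)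
    (hZ : AvoidsAP k D b Z) (hq : apSpan k D ≤ q)
    (hwin : ∀ j < apSpan k D, p - j ∈ X ↔ q - j ∈ Z) :
    AvoidsAP k D (p + (b - q)) (splice p q X Z) := by
  refine ⟨fun x hx => ?_, fun d hd hdD ⟨i, hi, hAP⟩ => ?_⟩
  · rcases le_or_gt x p with hxp | hxp
    · have := hX.1 ((mem_splice_of_le hxp).1 hx)
      simp only [mem_Icc] at this ⊢
      omega
    · have := hZ.1 ((mem_splice_of_lt hxp).1 hx)
      simp only [mem_Icc] at this ⊢
      omega
  · have hspan : (k - 1) * d ≤ apSpan k D := Nat.mul_le_mul_left _ hdD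
    have hjd : ∀ j < k, j * d ≤ (k - 1) * d := fun j hj => Nat.mul_le_mul_right _ (by omega)
    rcases le_or_gt (i + (k - 1) * d) p with hlast | hlast
    · exact hX.2 d hd hdD
        ⟨i, hi, fun j hj => (mem_splice_of_le (by linarith [hjd j hj])).1 (hAP j hj)⟩
    · refine hZ.2 d hd hdD ⟨i + q - p, by omega, fun j hj => ?_⟩
      have hx := hAP j hj
      have := hjd j hj
      rcases le_or_gt (i + j * d) p with hxp | hxp
      · have h := (hwin (p - (i + j * d)) (by omega)).1
          (by rwa [show p - (p - (i + j * d)) = i + j * d by omega, ← mem_splice_of_le hxp])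
        rwa [show q - (p - (i + j * d)) = i + q - p + j * d by omega] at h
      · rwa [mem_splice_of_lt hxp, show i + j * d + q - p = i + q - p + j * d by omega] at hx

lemma exists_strip (hS : AvoidsAP k D n S) (hc : IsCycle k D S s ℓ) (hn : s + ℓ ≤ n) :
    ∃ Y, AvoidsAP k D (n - ℓ) Y ∧ #Y + gain S s ℓ = #S ∧
      ∀ x ≤ s, x ∈ Y ↔ x ∈ S := by
  refine ⟨APFree.splice s (s + ℓ) S S, ?_, ?_, fun x hx => mem_splice_of_le hx⟩
  · have := hS.splice hS (by linarith [hc.apSpan_le]) hc.window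
    rwa [show s + (n - (s + ℓ)) = n - ℓ by omega] at this
  · rw [card_splice, ← card_filter_le_add_gain_add S s ℓ]
    ring

lemma exists_pump (hS : AvoidsAP k D n S) (hc : IsCycle k D S s ℓ) (hn : s + ℓ ≤ n) :
    ∃ T, AvoidsAP k D (n + ℓ) T ∧ #T = #S + gain S s ℓ ∧ IsCycle k D T (s + ℓ) ℓ ∧
      gain T (s + ℓ) ℓ = gain S s ℓ := by
  have hpos := hc.pos
  have hmem_lt : ∀ x, s + ℓ < x → (x ∈ APFree.splice (s + ℓ) s S S ↔ x - ℓ ∈ S) :=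
    fun x hx => by rw [mem_splice_of_lt hx, show x + s - (s + ℓ) = x - ℓ by omega]
  refine ⟨APFree.splice (s + ℓ) s S S, ?_, ?_,
    ⟨by linarith [hc.apSpan_le], hpos, fun j hj => ?_⟩, ?_⟩
  · have := hS.splice hS hc.apSpan_le fun j hj => (hc.window j hj).symm
    rwa [show s + ℓ + (n - s) = n + ℓ by omega] at this
  · have h₁ := card_filter_le_add_gain_add S s ℓ
    have h₂ := card_filter_le_add_gain_add S (s + ℓ) 0
    have h₃ := card_filter_le_add_gain_add S s 0
    simp only [gain_zero, add_zero] at h₂ h₃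
    rw [card_splice]
    omega
  · rw [mem_splice_of_le (by omega)]
    rcases lt_or_ge j ℓ with hjℓ | hjℓ
    · rw [hmem_lt _ (by omega), show s + ℓ + ℓ - j - ℓ = s + ℓ - j by omega]
    · rw [mem_splice_of_le (by omega)]
      have := hc.window (j - ℓ) (by omega)
      rwa [show s - (j - ℓ) = s + ℓ - j by omega,
        show s + ℓ - (j - ℓ) = s + ℓ + ℓ - j by omega] at this
  · refine gain_eq_of_shift ℓ fun x hx _ => ?_
    rw [hmem_lt _ (by omega), Nat.add_sub_cancel]

lemma exists_pump_iterate (r : ℕ) (hS : AvoidsAP k D n S) (hc : IsCycle k D S s ℓ)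
    (hn : s + ℓ ≤ n) : ∃ T, AvoidsAP k D (n + r * ℓ) T ∧ #T = #S + r * gain S s ℓ := by
  induction r generalizing n s S with
  | zero => exact ⟨S, by simpa using hS, by simp⟩
  | succ r ih =>
    obtain ⟨T, hT, hcard, hcT, hgain⟩ := hS.exists_pump hc hn
    obtain ⟨U, hU, hUcard⟩ := ih hT hcT (by omega)
    refine ⟨U, by rwa [show n + (r + 1) * ℓ = n + ℓ + r * ℓ by ring], ?_⟩
    rw [hUcard, hcard, hgain]
    ring

theorem period_mul_card_le (hS : AvoidsAP k D n S) :
    period k D * #S ≤ maxRate k D * n + period k D * (apSpan k D + 2 ^ apSpan k D) := by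
  induction n using Nat.strong_induction_on generalizing S with
  | _ n ih =>
  rcases lt_or_ge n (apSpan k D + 2 ^ apSpan k D) with hn | hn
  · calc period k D * #S ≤ period k D * (apSpan k D + 2 ^ apSpan k D) :=
          Nat.mul_le_mul_left _ (hS.card_le_s10.trans hn.le)
      _ ≤ _ := Nat.le_add_left _ _
  · obtain ⟨s, ℓ, hc, hs, hsℓ⟩ := exists_isCycle_mem_Icc (k := k) (D := D) S le_rfl
    have hℓ := hc.pos
    obtain ⟨Y, hY, hcard, -⟩ := hS.exists_strip hc (by omega)
    calc period k D * #S = period k D * #Y + period k D * gain S s ℓ := by rw [← hcard, mul_add]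
      _ ≤ maxRate k D * (n - ℓ) + period k D * (apSpan k D + 2 ^ apSpan k D) +
            maxRate k D * ℓ :=
          add_le_add (ih (n - ℓ) (by omega) hY)
            (hc.isCycleType hS (by omega) (by omega)).period_mul_le
      _ = maxRate k D * n + period k D * (apSpan k D + 2 ^ apSpan k D) := by
          rw [add_right_comm, ← mul_add, Nat.sub_add_cancel (by omega)]

/-- Cut one cycle out of each of the first `r` blocks of length `2 ^ apSpan k D + 1`, the last block
first; each cut loses strictly less than `maxRate k D / period k D` per unit of length. -/
theorem period_mul_card_add_le (hS : AvoidsAP k D n S) (r : ℕ)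
    (hn : apSpan k D + (2 ^ apSpan k D + 1) * r ≤ n)
    (hsub : ∀ s ℓ, IsCycle k D S s ℓ → ℓ ≤ 2 ^ apSpan k D →
      s + ℓ ≤ apSpan k D + (2 ^ apSpan k D + 1) * r →
        gain S s ℓ * (period k D / ℓ) < maxRate k D) :
    period k D * #S + r ≤ maxRate k D * n + period k D * (apSpan k D + 2 ^ apSpan k D) := by
  induction r generalizing n S with
  | zero => simpa using hS.period_mul_card_le
  | succ r ih =>
    have hblock : (2 ^ apSpan k D + 1) * (r + 1) =
        (2 ^ apSpan k D + 1) * r + 2 ^ apSpan k D + 1 := by ring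
    obtain ⟨s, ℓ, hc, has, hsℓ⟩ := exists_isCycle_mem_Icc (k := k) (D := D)
      (a := apSpan k D + (2 ^ apSpan k D + 1) * r) S (by omega)
    have hℓ := hc.pos
    obtain ⟨Y, hY, hcard, hagree⟩ := hS.exists_strip hc (by omega)
    have hYbound := ih hY (by omega) fun s' ℓ' hc' hℓ' hs' => by
      have hag : ∀ x ≤ s' + ℓ', x ∈ Y ↔ x ∈ S := fun x hx => hagree x (by omega)
      rw [gain_congr hag]
      exact hsub s' ℓ' (hc'.congr hag) hℓ' (by omega)
    have hdeficit := (hc.isCycleType hS (by omega) (by omega)).period_mul_lt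
      (hsub s ℓ hc (by omega) (by omega))
    calc period k D * #S + (r + 1) = (period k D * #Y + r) + (period k D * gain S s ℓ + 1) := by
          rw [← hcard]; ring
      _ ≤ maxRate k D * (n - ℓ) + period k D * (apSpan k D + 2 ^ apSpan k D) +
            maxRate k D * ℓ :=
          add_le_add hYbound hdeficit
      _ = maxRate k D * n + period k D * (apSpan k D + 2 ^ apSpan k D) := by
          rw [add_right_comm, ← mul_add, Nat.sub_add_cancel (by omega)]

lemma bddAbove_card (k D n : ℕ) :
    BddAbove {m | ∃ S : Finset ℕ, AvoidsAP k D n S ∧ #S = m} :=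
  ⟨n, by rintro _ ⟨S, hS, rfl⟩; exact hS.card_le_s10⟩

lemma card_le_R_s10 (hS : AvoidsAP k D n S) : #S ≤ R k D n :=
  le_csSup (bddAbove_card k D n) ⟨S, hS, rfl⟩

end AvoidsAP

section R

variable {k : ℕ}

lemma exists_avoidsAP_card_eq_R (hk : 0 < k) (D n : ℕ) :
    ∃ S, AvoidsAP k D n S ∧ #S = R k D n :=
  Nat.sSup_mem (s := {m | ∃ S : Finset ℕ, AvoidsAP k D n S ∧ #S = m})
    ⟨0, ∅, AvoidsAP.empty hk D n, rfl⟩ (AvoidsAP.bddAbove_card k D n)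

lemma R_mono (hk : 0 < k) (D : ℕ) : Monotone (R k D) := fun m n hmn => by
  obtain ⟨S, hS, hSR⟩ := exists_avoidsAP_card_eq_R hk D m
  exact hSR ▸ (hS.mono hmn).card_le_R_s10

lemma period_mul_R_le (hk : 0 < k) (D n : ℕ) :
    period k D * R k D n ≤ maxRate k D * n + period k D * (apSpan k D + 2 ^ apSpan k D) := by
  obtain ⟨S, hS, hSR⟩ := exists_avoidsAP_card_eq_R hk D n
  exact hSR ▸ hS.period_mul_card_le

lemma exists_maxRate_mul_le_period_mul_R (hk : 2 ≤ k) (D : ℕ) :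
    ∃ C, ∀ n, maxRate k D * n ≤ period k D * R k D n + C := by
  obtain ⟨ℓ, g, htype, hrate⟩ := exists_isCycleType_rate_eq_maxRate (D := D) hk
  obtain ⟨n₀, S₀, s₀, hS₀, hc, hn₀, rfl⟩ := htype.2
  have hcrit : period k D * gain S₀ s₀ ℓ = maxRate k D * ℓ := by
    rw [htype.period_mul_eq, hrate, mul_comm]
  refine ⟨maxRate k D * (n₀ + ℓ), fun n => ?_⟩
  rcases lt_or_ge n n₀ with hn | hn
  · calc maxRate k D * n ≤ maxRate k D * (n₀ + ℓ) := Nat.mul_le_mul_left _ (by omega)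
      _ ≤ _ := Nat.le_add_left _ _
  set q := (n - n₀) / ℓ
  obtain ⟨T, hT, hcard⟩ := hS₀.exists_pump_iterate q hc hn₀
  have hqℓ : q * ℓ ≤ n - n₀ := Nat.div_mul_le_self _ _
  have hlt : n - n₀ < q * ℓ + ℓ := Nat.lt_div_mul_add hc.pos
  have hRn : q * gain S₀ s₀ ℓ ≤ R k D n := calc
    q * gain S₀ s₀ ℓ ≤ #T := hcard ▸ Nat.le_add_left _ _
    _ ≤ R k D (n₀ + q * ℓ) := hT.card_le_R_s10
    _ ≤ R k D n := R_mono (by omega) D (by omega)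
  calc maxRate k D * n ≤ maxRate k D * (q * ℓ + (n₀ + ℓ)) :=
        Nat.mul_le_mul_left _ (by omega)
    _ = period k D * (q * gain S₀ s₀ ℓ) + maxRate k D * (n₀ + ℓ) := by
        rw [mul_add, mul_left_comm, mul_left_comm (period k D), hcrit]
    _ ≤ period k D * R k D n + maxRate k D * (n₀ + ℓ) := by gcongr

theorem exists_maxRate_cycle_of_card_eq_R (hk : 2 ≤ k) (D : ℕ) :
    ∃ N, ∀ n ≥ N, ∀ S, AvoidsAP k D n S → #S = R k D n →
      ∃ s ℓ, IsCycle k D S s ℓ ∧ ℓ ≤ 2 ^ apSpan k D ∧ s + ℓ ≤ n ∧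
        gain S s ℓ * (period k D / ℓ) = maxRate k D := by
  obtain ⟨C, hC⟩ := exists_maxRate_mul_le_period_mul_R hk D
  set r := period k D * (apSpan k D + 2 ^ apSpan k D) + C + 1
  refine ⟨apSpan k D + (2 ^ apSpan k D + 1) * r, fun n hn S hS hSR => ?_⟩
  by_contra! hno
  have hS' := hS.period_mul_card_add_le r hn fun s ℓ hc hℓ hsℓ =>
    (hc.isCycleType hS (by omega) hℓ).rate_le_maxRate.lt_of_ne (hno s ℓ hc hℓ (by omega))
  have := hC n
  rw [hSR] at hS'
  omega

theorem exists_R_add_maxRate_le (hk : 2 ≤ k) (D : ℕ) :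
    ∃ N, ∀ n ≥ N, R k D n + maxRate k D ≤ R k D (n + period k D) := by
  obtain ⟨N, hN⟩ := exists_maxRate_cycle_of_card_eq_R hk D
  refine ⟨N, fun n hn => ?_⟩
  obtain ⟨S, hS, hSR⟩ := exists_avoidsAP_card_eq_R (k := k) (by omega) D n
  obtain ⟨s, ℓ, hc, hℓ, hsℓ, hcrit⟩ := hN n hn S hS hSR
  obtain ⟨T, hT, hcard⟩ := hS.exists_pump_iterate (period k D / ℓ) hc hsℓ
  rw [Nat.div_mul_cancel (dvd_period hc.pos hℓ)] at hT
  calc R k D n + maxRate k D = #T := by rw [hcard, hSR, ← hcrit, mul_comm]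
    _ ≤ R k D (n + period k D) := hT.card_le_R_s10

end R

lemma exists_eventually_eq_of_le_succ {z : ℕ → ℤ} {N : ℕ} {B : ℤ}
    (hmono : ∀ n ≥ N, z n ≤ z (n + 1)) (hB : ∀ n, z n ≤ B) :
    ∃ c, ∀ᶠ n in atTop, z n = c := by
  obtain ⟨_, ⟨m, hm, rfl⟩, hmax⟩ := Int.exists_greatest_of_bdd
    (P := fun v => ∃ m ≥ N, z m = v) ⟨B, by rintro _ ⟨m, -, rfl⟩; exact hB m⟩
    ⟨z N, N, le_rfl, rfl⟩
  refine ⟨z m, eventually_atTop.2 ⟨m, fun n hn => ?_⟩⟩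
  exact le_antisymm (hmax _ ⟨n, hm.trans hn, rfl⟩)
    (monotoneOn_nat_Ici_of_le_succ hmono hm (hm.trans hn) hn)

theorem exists_eventually_quasilinear {f : ℕ → ℕ} {P Q N C : ℕ} (hQ : 0 < Q)
    (hstep : ∀ n ≥ N, f n + P ≤ f (n + Q)) (hle : ∀ n, Q * f n ≤ P * n + C) :
    ∃ a : ℕ → ℤ, ∃ N', ∀ n ≥ N', ∀ i ≤ Q,
      (f (Q * n + i) : ℤ) = P * n + a i := by
  have hconst : ∀ i, ∃ c : ℤ, ∀ᶠ n in atTop, (f (Q * n + i) : ℤ) - P * n = c := by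
    intro i
    refine exists_eventually_eq_of_le_succ (N := N) (B := P * i + C) (fun n hn => ?_) fun n => ?_
    · have h : (f (Q * n + i) : ℤ) + P ≤ f (Q * (n + 1) + i) := by
        rw [show Q * (n + 1) + i = Q * n + i + Q by ring]
        exact_mod_cast hstep (Q * n + i) (by nlinarith)
      push_cast
      linarith
    · have h : (Q : ℤ) * f (Q * n + i) ≤ P * (Q * n + i) + C := by
        exact_mod_cast hle (Q * n + i)
      have hQ' : (1 : ℤ) ≤ Q := by exact_mod_cast hQ
      rcases le_or_gt ((f (Q * n + i) : ℤ) - P * n) 0 with hz | hz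
      · linarith [(by positivity : (0 : ℤ) ≤ P * i + C)]
      · nlinarith
  choose a ha using hconst
  obtain ⟨N', hN'⟩ :=
    eventually_atTop.1 ((eventually_all_finset (range (Q + 1))).2 fun i _ => ha i)
  exact ⟨a, N', fun n hn i hi => by linarith [hN' n hn i (mem_range.2 (by omega))]⟩

theorem R_quasilinear_general (k D : ℕ) (hk : 3 ≤ k) :
    ∃ P Q : ℕ, 0 < P ∧ 0 < Q ∧ ∃ a : ℕ → ℤ, ∃ N : ℕ,
      ∀ n ≥ N, ∀ i : ℕ, 1 ≤ i → i ≤ Q →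
        (R k D (Q * n + i) : ℤ) = P * n + a i := by
  obtain ⟨N, hstep⟩ := exists_R_add_maxRate_le (k := k) (by omega) D
  obtain ⟨a, N', ha⟩ := exists_eventually_quasilinear (period_pos k D) hstep
    (period_mul_R_le (by omega) D)
  exact ⟨maxRate k D, period k D, maxRate_pos (by omega), period_pos k D, a, N',
    fun n hn i _ hi => ha n hn i hi⟩

theorem R_quasilinear (k D : ℕ) (hk : 3 ≤ k) (hD : 1 ≤ D) :
    ∃ P Q : ℕ, 0 < P ∧ 0 < Q ∧ ∃ a : ℕ → ℤ, ∃ N : ℕ,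
      ∀ n ≥ N, ∀ i : ℕ, 1 ≤ i → i ≤ Q →
        (R k D (Q * n + i) : ℤ) = P * n + a i :=
  R_quasilinear_general k D hk
end

section
/- Suppose sequences f_1, ..., f_N : ℕ → ℤ satisfy f_i(n) = max( f_{a(i)}(n-1) + 1, f_{b(i)}(n-1) ) for all n ≥ 1, where a, b : {1,...,N} → {1,...,N}. Then each f_i is eventually quasi-linear: there exist positive integers P, Q and for each i an integer c_i such that f_i(Qn + j) = Pn + c_{i,j} for all sufficiently large n (i.e., f_i(n+Q) = f_i(n) + P eventually). -/
/-!
Subtracting `n` turns the recurrence into `g_i(n) = max (g_{a(i)}(n-1), g_{b(i)}(n-1) - 1)`, an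
autonomous map on `ℤ^N` that preserves every box `[m, M]^N`. Starting from `g(0) = f(0)`, the orbit
stays in a finite box, so it is eventually periodic with some period `Q`, which gives
`f_i(n + Q) = f_i(n) + Q` eventually.
-/

open Set

theorem Set.Finite.exists_iterate_add_eq {α : Type*} {T : α → α} {s : Set α} (hs : s.Finite)
    (hT : MapsTo T s s) {x : α} (hx : x ∈ s) :
    ∃ Q, 0 < Q ∧ ∃ n₀, ∀ n ≥ n₀, T^[n + Q] x = T^[n] x := by
  obtain ⟨m, k, hmk, hrep⟩ :=
    hs.exists_lt_map_eq_of_forall_mem (f := fun n => T^[n] x) fun n => hT.iterate n hx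
  refine ⟨k - m, by omega, m, fun n hn => ?_⟩
  calc T^[n + (k - m)] x = T^[n - m] (T^[k] x) := by
        rw [← Function.iterate_add_apply]; congr 1; omega
    _ = T^[n] x := by
        rw [← hrep, ← Function.iterate_add_apply]; congr 1; omega

namespace MaxRecurrence

variable {ι : Type*} (a b : ι → ι)

def normalizedStep (v : ι → ℤ) : ι → ℤ := fun i => max (v (a i)) (v (b i) - 1)

theorem mapsTo_normalizedStep_Icc (m M : ℤ) :
    MapsTo (normalizedStep a b) (Icc (fun _ => m) (fun _ => M)) (Icc (fun _ => m) (fun _ => M)) :=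
  fun _ ⟨hm, hM⟩ => ⟨fun i => le_max_of_le_left (hm (a i)),
    fun i => max_le (hM (a i)) ((sub_le_self _ zero_le_one).trans (hM (b i)))⟩

theorem sub_eq_iterate_normalizedStep {f : ι → ℕ → ℤ}
    (hf : ∀ i : ι, ∀ n : ℕ, 1 ≤ n → f i n = max (f (a i) (n - 1) + 1) (f (b i) (n - 1)))
    (n : ℕ) : (fun i => f i n - n) = (normalizedStep a b)^[n] (fun i => f i 0) := by
  induction n with
  | zero => simp
  | succ n ih =>
    rw [Function.iterate_succ_apply', ← ih]
    funext i
    rw [hf i (n + 1) n.succ_pos, Nat.add_sub_cancel]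
    simp only [normalizedStep]
    push_cast
    omega

end MaxRecurrence

theorem max_recurrence_quasilinear_general (N : ℕ)
    (a b : Fin N → Fin N) (f : Fin N → ℕ → ℤ)
    (hf : ∀ i : Fin N, ∀ n : ℕ, 1 ≤ n →
      f i n = max (f (a i) (n - 1) + 1) (f (b i) (n - 1))) :
    ∃ P Q : ℕ, 0 < P ∧ 0 < Q ∧ ∃ N0 : ℕ,
      ∀ i : Fin N, ∀ n ≥ N0, f i (n + Q) = f i n + P := by
  obtain ⟨M, hM⟩ := (finite_range fun j => f j 0).bddAbove
  obtain ⟨m, hm⟩ := (finite_range fun j => f j 0).bddBelow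
  have hinit : (fun j => f j 0) ∈ Icc (fun _ => m) (fun _ => M) :=
    ⟨fun j => hm ⟨j, rfl⟩, fun j => hM ⟨j, rfl⟩⟩
  obtain ⟨Q, hQ, N0, hper⟩ :=
    (finite_Icc _ _).exists_iterate_add_eq (MaxRecurrence.mapsTo_normalizedStep_Icc a b m M) hinit
  refine ⟨Q, Q, hQ, hQ, N0, fun i n hn => ?_⟩
  have h := congrFun (hper n hn) i
  simp only [← MaxRecurrence.sub_eq_iterate_normalizedStep a b hf] at h
  push_cast at h
  linarith

theorem max_recurrence_quasilinear (N : ℕ) (hN : 1 ≤ N)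
    (a b : Fin N → Fin N) (f : Fin N → ℕ → ℤ)
    (hf : ∀ i : Fin N, ∀ n : ℕ, 1 ≤ n →
      f i n = max (f (a i) (n - 1) + 1) (f (b i) (n - 1))) :
    ∃ P Q : ℕ, 0 < P ∧ 0 < Q ∧ ∃ N0 : ℕ,
      ∀ i : Fin N, ∀ n ≥ N0, f i (n + Q) = f i n + P :=
  max_recurrence_quasilinear_general N a b f hf
end
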